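/- If Γ ⊢ φ is derivable in intuitionistic propositional natural deduction, then Γ ⊢ M : φ for some proof term M in long normal form. -/

import Mathlib

set_option autoImplicit true

namespace IPCStmt3

inductive Formula : Type
  | var : ℕ → Formula
  | bot : Formula
  | imp : Formula → Formula → Formula
  | conj : Formula → Formula → Formula
  | disj : Formula → Formula → Formula
  deriving DecidableEq

/-- Proof terms of IPC (Church style, de Bruijn indices).
`abort M φ` is the ⊥-eliminator `M[φ]`, `case M φ N₁ ψ N₂ ρ` is the
∨-eliminator `M[x:φ.N₁; y:ψ.N₂]` annotated with its result type ρ. -/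
inductive Tm : Type
  | var : ℕ → Tm
  | abort : Tm → Formula → Tm
  | lam : Formula → Tm → Tm
  | app : Tm → Tm → Tm
  | pair : Tm → Tm → Tm
  | fst : Tm → Tm
  | snd : Tm → Tm
  | inl : Tm → Tm
  | inr : Tm → Tm
  | case : Tm → Formula → Tm → Formula → Tm → Formula → Tm
  deriving DecidableEq

/-- Natural deduction for IPC as a type assignment system. -/
inductive Typing : List Formula → Tm → Formula → Prop
  | var {Γ n φ} : Γ[n]? = some φ → Typing Γ (.var n) φ
  | abort {Γ M φ} : Typing Γ M .bot → Typing Γ (.abort M φ) φ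
  | lam {Γ φ ψ M} : Typing (φ :: Γ) M ψ → Typing Γ (.lam φ M) (.imp φ ψ)
  | app {Γ M N φ ψ} : Typing Γ M (.imp φ ψ) → Typing Γ N φ → Typing Γ (.app M N) ψ
  | pair {Γ M N φ ψ} : Typing Γ M φ → Typing Γ N ψ → Typing Γ (.pair M N) (.conj φ ψ)
  | fst {Γ M φ ψ} : Typing Γ M (.conj φ ψ) → Typing Γ (.fst M) φ
  | snd {Γ M φ ψ} : Typing Γ M (.conj φ ψ) → Typing Γ (.snd M) ψ
  | inl {Γ M φ ψ} : Typing Γ M φ → Typing Γ (.inl M) (.disj φ ψ)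
  | inr {Γ M φ ψ} : Typing Γ M ψ → Typing Γ (.inr M) (.disj φ ψ)
  | case {Γ M N₁ N₂ φ ψ ρ} : Typing Γ M (.disj φ ψ) → Typing (φ :: Γ) N₁ ρ →
      Typing (ψ :: Γ) N₂ ρ → Typing Γ (.case M φ N₁ ψ N₂ ρ) ρ


def Formula.isAtom : Formula → Prop
  | .var _ => True
  | .bot => True
  | _ => False

def Formula.isDisj : Formula → Prop
  | .disj _ _ => True
  | _ => False

mutual
  /-- `Lnf M φ`: the term `M` is a long normal form of type `φ`. -/
  inductive Lnf : Tm → Formula → Prop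
    | lam {φ ψ N} : Lnf N ψ → Lnf (.lam φ N) (.imp φ ψ)
    | pair {φ ψ N₁ N₂} : Lnf N₁ φ → Lnf N₂ ψ → Lnf (.pair N₁ N₂) (.conj φ ψ)
    | inl {φ ψ N} : Lnf N φ → Lnf (.inl N) (.disj φ ψ)
    | inr {φ ψ N} : Lnf N ψ → Lnf (.inr N) (.disj φ ψ)
    | spine {M φ} : Spine M → φ.isAtom → Lnf M φ
    | caseE {M φ ψ ρ P Q} : Spine M → Lnf P ρ → Lnf Q ρ → (ρ.isAtom ∨ ρ.isDisj) →
        Lnf (.case M φ P ψ Q ρ) ρ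
    | abortE {M ρ} : Spine M → (ρ.isAtom ∨ ρ.isDisj) → Lnf (.abort M ρ) ρ

  /-- `Spine M`: the term `M` has the shape `x E₁ … Eₙ` where every `Eᵢ` is a
  projection or a long normal form. -/
  inductive Spine : Tm → Prop
    | var {n} : Spine (.var n)
    | app {M N} {φ : Formula} : Spine M → Lnf N φ → Spine (.app M N)
    | fst {M} : Spine M → Spine (.fst M)
    | snd {M} : Spine M → Spine (.snd M)
end

/-! ### Normalization by evaluation -/

/-- Lift a renaming under a binder. -/
def liftR (ρ : ℕ → ℕ) : ℕ → ℕ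
  | 0 => 0
  | n + 1 => ρ n + 1

/-- Apply a renaming to a term. -/
def Tm.rename (ρ : ℕ → ℕ) : Tm → Tm
  | .var n => .var (ρ n)
  | .abort M φ => .abort (M.rename ρ) φ
  | .lam φ M => .lam φ (M.rename (liftR ρ))
  | .app M N => .app (M.rename ρ) (N.rename ρ)
  | .pair M N => .pair (M.rename ρ) (N.rename ρ)
  | .fst M => .fst (M.rename ρ)
  | .snd M => .snd (M.rename ρ)
  | .inl M => .inl (M.rename ρ)
  | .inr M => .inr (M.rename ρ)
  | .case M φ N₁ ψ N₂ χ =>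
      .case (M.rename ρ) φ (N₁.rename (liftR ρ)) ψ (N₂.rename (liftR ρ)) χ

/-- `Ren ρ Γ Δ`: the renaming `ρ` maps the context `Γ` into `Δ`. -/
def Ren (ρ : ℕ → ℕ) (Γ Δ : List Formula) : Prop :=
  ∀ n φ, Γ[n]? = some φ → Δ[ρ n]? = some φ

theorem Ren.id' {Γ : List Formula} : Ren id Γ Γ := fun _ _ h => h

theorem Ren.succ {Γ : List Formula} {φ} : Ren Nat.succ Γ (φ :: Γ) :=
  fun _ _ h => h

theorem Ren.comp {ρ σ Γ Δ Θ} (h₁ : Ren ρ Γ Δ) (h₂ : Ren σ Δ Θ) :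
    Ren (σ ∘ ρ) Γ Θ := fun n φ h => h₂ _ _ (h₁ n φ h)

theorem Ren.lift {ρ Γ Δ} (h : Ren ρ Γ Δ) (φ : Formula) :
    Ren (liftR ρ) (φ :: Γ) (φ :: Δ) := by
  intro n ψ hn
  cases n with
  | zero => exact hn
  | succ n => exact h n ψ hn

theorem Typing.rename {Γ M φ} (h : Typing Γ M φ) :
    ∀ {Δ ρ}, Ren ρ Γ Δ → Typing Δ (M.rename ρ) φ := by
  induction h with
  | var h => exact fun hρ => .var (hρ _ _ h)
  | abort _ ih => exact fun hρ => .abort (ih hρ)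
  | lam _ ih => exact fun hρ => .lam (ih (hρ.lift _))
  | app _ _ ih₁ ih₂ => exact fun hρ => .app (ih₁ hρ) (ih₂ hρ)
  | pair _ _ ih₁ ih₂ => exact fun hρ => .pair (ih₁ hρ) (ih₂ hρ)
  | fst _ ih => exact fun hρ => .fst (ih hρ)
  | snd _ ih => exact fun hρ => .snd (ih hρ)
  | inl _ ih => exact fun hρ => .inl (ih hρ)
  | inr _ ih => exact fun hρ => .inr (ih hρ)
  | case _ _ _ ih ih₁ ih₂ =>
      exact fun hρ => .case (ih hρ) (ih₁ (hρ.lift _)) (ih₂ (hρ.lift _))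

mutual
theorem Lnf.rename : ∀ {M φ}, Lnf M φ → ∀ ρ, Lnf (M.rename ρ) φ
  | _, _, .lam h, _ => .lam (h.rename _)
  | _, _, .pair h₁ h₂, _ => .pair (h₁.rename _) (h₂.rename _)
  | _, _, .inl h, _ => .inl (h.rename _)
  | _, _, .inr h, _ => .inr (h.rename _)
  | _, _, .spine hS ha, _ => .spine (hS.rename _) ha
  | _, _, .caseE hS hP hQ hρ, _ =>
      .caseE (hS.rename _) (hP.rename _) (hQ.rename _) hρ
  | _, _, .abortE hS hρ, _ => .abortE (hS.rename _) hρ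

theorem Spine.rename : ∀ {M}, Spine M → ∀ ρ, Spine (M.rename ρ)
  | _, .var, _ => .var
  | _, .app hM hN, _ => .app (hM.rename _) (hN.rename _)
  | _, .fst h, _ => .fst (h.rename _)
  | _, .snd h, _ => .snd (h.rename _)
end

/-- Long normal forms of type `φ` in context `Γ`. -/
def Nf (Γ : List Formula) (φ : Formula) : Prop :=
  ∃ M, Typing Γ M φ ∧ Lnf M φ

/-- Neutral (spine) terms of type `φ` in context `Γ`. -/
def Ne' (Γ : List Formula) (φ : Formula) : Prop :=
  ∃ M, Typing Γ M φ ∧ Spine M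

/-- The Beth cover monad. -/
inductive Cover (A : List Formula → Prop) : List Formula → Prop
  | ret {Γ} : A Γ → Cover A Γ
  | split {Γ M φ ψ} : Typing Γ M (.disj φ ψ) → Spine M →
      Cover A (φ :: Γ) → Cover A (ψ :: Γ) → Cover A Γ
  | abrt {Γ M} : Typing Γ M .bot → Spine M → Cover A Γ

theorem Cover.map' {A B : List Formula → Prop} :
    ∀ {Γ}, Cover A Γ → (∀ Θ σ, Ren σ Γ Θ → A Θ → B Θ) → Cover B Γ := by
  intro Γ c
  induction c with
  | ret a => exact fun f => .ret (f _ id Ren.id' a)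
  | split hM hS _ _ ih₁ ih₂ =>
      exact fun f => .split hM hS
        (ih₁ fun Θ σ hσ a => f Θ (σ ∘ Nat.succ) (Ren.comp Ren.succ hσ) a)
        (ih₂ fun Θ σ hσ a => f Θ (σ ∘ Nat.succ) (Ren.comp Ren.succ hσ) a)
  | abrt hM hS => exact fun _ => .abrt hM hS

theorem Cover.mono {A : List Formula → Prop}
    (hA : ∀ {Γ Δ} (ρ : ℕ → ℕ), Ren ρ Γ Δ → A Γ → A Δ) :
    ∀ {Γ}, Cover A Γ → ∀ {Δ ρ}, Ren ρ Γ Δ → Cover A Δ := by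
  intro Γ c
  induction c with
  | ret a => exact fun hρ => .ret (hA _ hρ a)
  | split hM hS _ _ ih₁ ih₂ =>
      exact fun hρ => .split (hM.rename hρ) (hS.rename _)
        (ih₁ (hρ.lift _)) (ih₂ (hρ.lift _))
  | abrt hM hS => exact fun hρ => .abrt (hM.rename hρ) (hS.rename _)

theorem Cover.join {A : List Formula → Prop} :
    ∀ {Γ}, Cover (fun Δ => Cover A Δ) Γ → Cover A Γ := by
  intro Γ c
  induction c with
  | ret a => exact a
  | split hM hS _ _ ih₁ ih₂ => exact .split hM hS ih₁ ih₂
  | abrt hM hS => exact .abrt hM hS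

theorem Cover.fold {χ : Formula} (hχ : χ.isAtom ∨ χ.isDisj) :
    ∀ {Γ}, Cover (fun Δ => Nf Δ χ) Γ → Nf Γ χ := by
  intro Γ c
  induction c with
  | ret a => exact a
  | split hM hS _ _ ih₁ ih₂ =>
      obtain ⟨N₁, h₁, l₁⟩ := ih₁
      obtain ⟨N₂, h₂, l₂⟩ := ih₂
      exact ⟨_, .case hM h₁ h₂, .caseE hS l₁ l₂ hχ⟩
  | abrt hM hS => exact ⟨_, .abort hM, .abortE hS hχ⟩

/-- Kripke/Beth semantics of formulas. -/
def Sem : Formula → List Formula → Prop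
  | .var p, Γ => Nf Γ (.var p)
  | .bot, Γ => Cover (fun _ => False) Γ
  | .imp φ ψ, Γ => ∀ Δ σ, Ren σ Γ Δ → Sem φ Δ → Sem ψ Δ
  | .conj φ ψ, Γ => Sem φ Γ ∧ Sem ψ Γ
  | .disj φ ψ, Γ => Cover (fun Δ => Sem φ Δ ∨ Sem ψ Δ) Γ

theorem Sem.mono : ∀ (φ : Formula) {Γ Δ ρ}, Ren ρ Γ Δ → Sem φ Γ → Sem φ Δ := by
  intro φ
  induction φ with
  | var p =>
      rintro Γ Δ ρ hρ ⟨M, hM, l⟩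
      exact ⟨_, hM.rename hρ, l.rename _⟩
  | bot =>
      intro Γ Δ ρ hρ c
      exact Cover.mono (fun _ _ f => f) c hρ
  | imp φ ψ ihφ ihψ =>
      intro Γ Δ ρ hρ f Θ σ hσ a
      exact f Θ (σ ∘ ρ) (hρ.comp hσ) a
  | conj φ ψ ihφ ihψ =>
      rintro Γ Δ ρ hρ ⟨a, b⟩
      exact ⟨ihφ hρ a, ihψ hρ b⟩
  | disj φ ψ ihφ ihψ =>
      intro Γ Δ ρ hρ c
      exact Cover.mono (fun τ hτ ab => Or.imp (ihφ hτ) (ihψ hτ) ab) c hρ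

theorem Sem.paste : ∀ (φ : Formula) {Γ}, Cover (Sem φ) Γ → Sem φ Γ := by
  intro φ
  induction φ with
  | var p => exact fun c => Cover.fold (χ := .var p) (Or.inl trivial) c
  | bot => exact fun c => c.join
  | imp φ ψ ihφ ihψ =>
      intro Γ c Δ σ hσ a
      exact ihψ ((Cover.mono (fun τ hτ f => Sem.mono (.imp φ ψ) hτ f) c hσ).map'
        fun Θ τ hτ f => f Θ id Ren.id' (Sem.mono φ hτ a))
  | conj φ ψ ihφ ihψ =>
      intro Γ c
      exact ⟨ihφ (c.map' fun _ _ _ p => p.1), ihψ (c.map' fun _ _ _ p => p.2)⟩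
  | disj φ ψ ihφ ihψ => exact fun c => c.join

theorem reflect_reify :
    ∀ (φ : Formula), (∀ Γ, Ne' Γ φ → Sem φ Γ) ∧ (∀ Γ, Sem φ Γ → Nf Γ φ) := by
  intro φ
  induction φ with
  | var p =>
      refine ⟨fun Γ n => ?_, fun Γ a => a⟩
      obtain ⟨M, hM, hS⟩ := n
      exact ⟨M, hM, .spine hS trivial⟩
  | bot =>
      refine ⟨fun Γ n => ?_, fun Γ c => ?_⟩
      · obtain ⟨M, hM, hS⟩ := n
        exact .abrt hM hS
      · exact Cover.fold (χ := .bot) (Or.inl trivial) (Cover.map' c fun _ _ _ f => f.elim)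
  | imp φ ψ ihφ ihψ =>
      refine ⟨fun Γ n => ?_, fun Γ f => ?_⟩
      · obtain ⟨M, hM, hS⟩ := n
        intro Δ σ hσ a
        obtain ⟨N, hN, lN⟩ := ihφ.2 Δ a
        exact ihψ.1 Δ ⟨_, .app (hM.rename hσ) hN, .app (hS.rename _) lN⟩
      · obtain ⟨N, hN, lN⟩ := ihψ.2 (φ :: Γ)
          (f (φ :: Γ) Nat.succ Ren.succ (ihφ.1 _ ⟨.var 0, .var rfl, .var⟩))
        exact ⟨_, .lam hN, .lam lN⟩
  | conj φ ψ ihφ ihψ =>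
      refine ⟨fun Γ n => ?_, fun Γ a => ?_⟩
      · obtain ⟨M, hM, hS⟩ := n
        exact ⟨ihφ.1 _ ⟨_, .fst hM, .fst hS⟩, ihψ.1 _ ⟨_, .snd hM, .snd hS⟩⟩
      · obtain ⟨N₁, h₁, l₁⟩ := ihφ.2 _ a.1
        obtain ⟨N₂, h₂, l₂⟩ := ihψ.2 _ a.2
        exact ⟨_, .pair h₁ h₂, .pair l₁ l₂⟩
  | disj φ ψ ihφ ihψ =>
      refine ⟨fun Γ n => ?_, fun Γ c => ?_⟩
      · obtain ⟨M, hM, hS⟩ := n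
        exact .split hM hS
          (.ret (Or.inl (ihφ.1 _ ⟨.var 0, .var rfl, .var⟩)))
          (.ret (Or.inr (ihψ.1 _ ⟨.var 0, .var rfl, .var⟩)))
      · refine Cover.fold (χ := .disj φ ψ) (Or.inr trivial) (Cover.map' c fun Θ σ hσ ab => ?_)
        rcases ab with a | b
        · obtain ⟨N, hN, lN⟩ := ihφ.2 _ a
          exact ⟨_, .inl hN, .inl lN⟩
        · obtain ⟨N, hN, lN⟩ := ihψ.2 _ b
          exact ⟨_, .inr hN, .inr lN⟩

/-- Semantic environments. -/
def Env (Γ Δ : List Formula) : Prop :=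
  ∀ (n : ℕ) ψ, Γ[n]? = some ψ → Sem ψ Δ

theorem Env.mono {Γ Δ Θ σ} (hσ : Ren σ Δ Θ) (env : Env Γ Δ) : Env Γ Θ :=
  fun n ψ h => Sem.mono ψ hσ (env n ψ h)

theorem Env.cons {Γ Δ φ} (a : Sem φ Δ) (env : Env Γ Δ) : Env (φ :: Γ) Δ := by
  intro n ψ h
  cases n with
  | zero => cases h; exact a
  | succ n => exact env n ψ h

theorem eval {Γ M φ} (h : Typing Γ M φ) : ∀ {Δ}, Env Γ Δ → Sem φ Δ := by
  induction h with
  | var h => exact fun env => env _ _ h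
  | @abort Γ M φ _ ih =>
      intro Δ env
      exact Sem.paste φ ((ih env).map' fun _ _ _ f => f.elim)
  | lam _ ih =>
      intro Δ env Θ σ hσ a
      exact ih (Env.cons a (env.mono hσ))
  | app _ _ ih₁ ih₂ =>
      intro Δ env
      exact ih₁ env Δ id Ren.id' (ih₂ env)
  | pair _ _ ih₁ ih₂ => exact fun env => ⟨ih₁ env, ih₂ env⟩
  | fst _ ih => exact fun env => (ih env).1
  | snd _ ih => exact fun env => (ih env).2
  | inl _ ih => exact fun env => .ret (Or.inl (ih env))
  | inr _ ih => exact fun env => .ret (Or.inr (ih env))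
  | @case Γ M N₁ N₂ φ ψ χ _ _ _ ihM ih₁ ih₂ =>
      intro Δ env
      refine Sem.paste χ ((ihM env).map' fun Θ σ hσ ab => ?_)
      rcases ab with a | b
      · exact ih₁ (Env.cons a (env.mono hσ))
      · exact ih₂ (Env.cons b (env.mono hσ))

/-- if `Γ ⊢ φ` is derivable in intuitionistic propositional natural
deduction, then `Γ ⊢ M : φ` for some proof term `M` in long normal form. -/
theorem exists_long_normal_form {Γ : List Formula} {φ : Formula}
    (h : ∃ M : Tm, Typing Γ M φ) : ∃ M : Tm, Typing Γ M φ ∧ Lnf M φ := by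
  obtain ⟨M, hM⟩ := h
  exact (reflect_reify φ).2 Γ
    (eval hM fun n ψ hn => (reflect_reify ψ).1 Γ ⟨.var n, .var hn, .var⟩)

end IPCStmt3
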